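/- Let E be a collection of d-element subsets of [n] whose pairwise intersections have size at most λ̄, with λ̄ < d ≤ 3λ̄/(2c) for a constant c ∈ [1, 3/2). Then any E-separable code has length at least (λ̄ / (c(d − λ̄/c)·log₂(e·λ̄/(c(d − λ̄/c))))) · log₂(|E| / n^{λ̄/c}). -/

import Mathlib

/-!
Separability makes `e ↦ ⋃_{i ∈ e} G i` injective on `E`, so `|E| ≤ 2^t`, while `d`-uniformity gives
`|E| ≤ n^d`. Interpolating between the two bounds on `log₂ |E|` gives
`log₂ (|E| / n^{λ/c}) ≤ (1 - λ/(cd)) t`, and the prefactor times `1 - λ/(cd)` equals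
`λ / (cd · log₂ (eλ/(cd - λ)))`, which is at most `1` because `d ≤ 3λ/(2c)` forces the logarithm to be
at least `1`.
-/

open Finset Real

lemma Finset.card_le_two_pow_of_injOn {γ β : Type*} [Fintype β] {E : Finset γ} {f : γ → Finset β}
    (hf : Set.InjOn f E) : #E ≤ 2 ^ Fintype.card β := by
  simpa using card_le_card_of_injOn f (fun _ _ => mem_univ _) hf

lemma Finset.card_le_pow_of_forall_card_eq {α : Type*} [Fintype α] {E : Finset (Finset α)} {d : ℕ}
    (h : ∀ e ∈ E, #e = d) : #E ≤ Fintype.card α ^ d := by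
  have hsub : E ⊆ powersetCard d univ := fun e he => mem_powersetCard.mpr ⟨subset_univ e, h e he⟩
  calc #E ≤ #(powersetCard d (univ : Finset α)) := card_le_card hsub
    _ = (Fintype.card α).choose d := by rw [card_powersetCard, card_univ]
    _ ≤ Fintype.card α ^ d := Nat.choose_le_pow _ _

lemma Real.logb_two_div_rpow_le {x n a : ℝ} {t d : ℕ} (hx : 0 ≤ x) (hn : 0 ≤ n) (hd : 0 < d)
    (hxt : x ≤ 2 ^ t) (hxn : x ≤ n ^ d) (ha : 0 ≤ a) (had : a ≤ d) :
    logb 2 (x / n ^ a) ≤ (1 - a / d) * t := by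
  have hdR : (0 : ℝ) < d := by exact_mod_cast hd
  have hcoef : 0 ≤ 1 - a / d := by rw [sub_nonneg, div_le_one hdR]; exact had
  rcases hx.eq_or_lt with rfl | hx
  · simpa using mul_nonneg hcoef (Nat.cast_nonneg t)
  have hn : 0 < n := hn.lt_of_ne fun h => by simp [← h, hd.ne'] at hxn; linarith
  have hLt : logb 2 x ≤ t := by
    rw [logb_le_iff_le_rpow one_lt_two hx, rpow_natCast]; exact hxt
  have hLn : logb 2 x ≤ d * logb 2 n := by
    rw [← logb_pow]; exact logb_le_logb_of_le one_lt_two hx hxn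
  have haN : a / d * logb 2 x ≤ a * logb 2 n := by
    calc a / d * logb 2 x ≤ a / d * (d * logb 2 n) := by gcongr
      _ = a * logb 2 n := by field_simp
  rw [logb_div hx.ne' (rpow_pos_of_pos hn a).ne', logb_rpow_eq_mul_logb_of_pos hn]
  nlinarith [mul_le_mul_of_nonneg_left hLt hcoef]

lemma Real.one_le_logb_two_exp_mul_div {x y : ℝ} (hy : 0 < y) (h : 2 * y ≤ x) :
    1 ≤ logb 2 (exp 1 * x / y) := by
  have hx : 0 < x := by linarith
  rw [le_logb_iff_rpow_le one_lt_two (by positivity), rpow_one, le_div_iff₀ hy]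
  nlinarith [exp_one_gt_d9]

theorem stmt9_general {n t d lam : ℕ} (E : Finset (Finset (Fin n))) (G : Fin n → Finset (Fin t))
    (hunif : ∀ e ∈ E, e.card = d)
    (hsep : ∀ e ∈ E, ∀ e' ∈ E, e ≠ e' → e.biUnion G ≠ e'.biUnion G)
    (c : ℝ) (hc1 : 1 ≤ c)
    (hlamd : lam < d) (hd : (d : ℝ) ≤ 3 * lam / (2 * c)) :
    (t : ℝ) ≥
      ((lam : ℝ) /
          (c * ((d : ℝ) - lam / c) *
            Real.logb 2 (Real.exp 1 * lam / (c * ((d : ℝ) - lam / c))))) *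
        Real.logb 2 ((E.card : ℝ) / (n : ℝ) ^ ((lam : ℝ) / c)) := by
  have hc0 : 0 < c := by linarith
  have hlamdR : (lam : ℝ) < d := by exact_mod_cast hlamd
  have hd0 : (0 : ℝ) < d := (Nat.cast_nonneg lam).trans_lt hlamdR
  have hB : c * ((d : ℝ) - lam / c) = c * d - lam := by field_simp
  have h2cd : 2 * c * d ≤ 3 * lam := by rw [le_div_iff₀ (by positivity)] at hd; linarith
  have hBpos : 0 < c * (d : ℝ) - lam := by nlinarith
  have hinj : Set.InjOn (·.biUnion G) (E : Set (Finset (Fin n))) :=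
    fun e he e' he' h => by_contra fun hne => hsep e he e' he' hne h
  have hcodes : (#E : ℝ) ≤ 2 ^ t := by
    exact_mod_cast (card_le_two_pow_of_injOn hinj).trans_eq (by rw [Fintype.card_fin])
  have hsets : (#E : ℝ) ≤ (n : ℝ) ^ d := by
    exact_mod_cast (card_le_pow_of_forall_card_eq hunif).trans_eq (by rw [Fintype.card_fin])
  have hbound := logb_two_div_rpow_le (by positivity) (Nat.cast_nonneg n) (by omega) hcodes hsets
    (by positivity) ((div_le_self (Nat.cast_nonneg lam) hc1).trans hlamdR.le)
  rw [hB, ge_iff_le]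
  set L := logb 2 (exp 1 * lam / (c * d - lam))
  have hlog : 1 ≤ L := one_le_logb_two_exp_mul_div hBpos (by linarith)
  have hL : 0 < L := zero_lt_one.trans_le hlog
  calc _ ≤ lam / ((c * d - lam) * L) * ((1 - lam / c / d) * t) :=
        mul_le_mul_of_nonneg_left hbound (by positivity)
    _ = lam / (c * d * L) * t := by field_simp
    _ ≤ t := by
        refine mul_le_of_le_one_left (Nat.cast_nonneg t) ((div_le_one (by positivity)).mpr ?_)
        nlinarith

theorem stmt9 {n t d lam : ℕ} (E : Finset (Finset (Fin n))) (G : Fin n → Finset (Fin t))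
    (hunif : ∀ e ∈ E, e.card = d)
    (hint : ∀ e ∈ E, ∀ e' ∈ E, e ≠ e' → (e ∩ e').card ≤ lam)
    (hsep : ∀ e ∈ E, ∀ e' ∈ E, e ≠ e' → e.biUnion G ≠ e'.biUnion G)
    (c : ℝ) (hc1 : 1 ≤ c) (hc2 : c < 3 / 2)
    (hlam : 0 < lam) (hlamd : lam < d) (hd : (d : ℝ) ≤ 3 * lam / (2 * c)) :
    (t : ℝ) ≥
      ((lam : ℝ) /
          (c * ((d : ℝ) - lam / c) *
            Real.logb 2 (Real.exp 1 * lam / (c * ((d : ℝ) - lam / c))))) *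
        Real.logb 2 ((E.card : ℝ) / (n : ℝ) ^ ((lam : ℝ) / c)) :=
  stmt9_general E G hunif hsep c hc1 hlamd hd
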